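/- Let R be a commutative ring, σ a finite index type, and n : σ →₀ ℕ. Then the divided-power operator D_n on MvPolynomial σ R is a differential operator of order ≤ |n| in Grothendieck's sense, where |n| = Σ i, n i: every (|n|+1)-fold iterated commutator [[…[D_n, t_{f₀}], t_{f₁}], …, t_{f_{|n|}}] with multiplication operators t_f vanishes. -/

import Mathlib

/-
Multiplication operators commute with each other, so the operators of order `≤ m` are stable under
composition with them on either side, and `[D, t_{ab}] = [D, t_a] t_b + t_a [D, t_b]`. Hence
`D` has order `≤ m + 1` as soon as its commutators with the multiplications by a set of algebra
generators have order `≤ m`. For `D_n` and the generator `X_j`, Pascal's rule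
`C(k + 1, l + 1) = C(k, l) + C(k, l + 1)` gives `[D_n, t_{X_j}] = D_{n - e_j}` when `n_j > 0`,
and `0` when `n_j = 0`; induction on `|n|` concludes, the base case being `D_0 = id`.
-/

/-- The divided-power operator `D_n` on `MvPolynomial σ R`, determined on monomials by
`D_n (X ^ m) = (∏ i, Nat.choose (m i) (n i)) • X ^ (m - n)` (componentwise truncated
subtraction). -/
noncomputable def dpOp (R : Type*) [CommRing R] (σ : Type*) [Fintype σ] (n : σ →₀ ℕ) :
    MvPolynomial σ R →ₗ[R] MvPolynomial σ R :=
  (Finsupp.lsum ℕ fun m : σ →₀ ℕ =>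
    (∏ i, Nat.choose (m i) (n i)) • (MvPolynomial.monomial (m - n) : R →ₗ[R] MvPolynomial σ R))
    ∘ₗ (AddMonoidAlgebra.coeffLinearEquiv R).toLinearMap

/-- `D` is a differential operator of order `≤ m` in Grothendieck's sense: every
`(m+1)`-fold iterated commutator of `D` with multiplication operators vanishes. -/
def IsDiffOpLE (R : Type*) {A : Type*} [CommRing R] [CommRing A] [Algebra R A]
    (m : ℕ) (D : A →ₗ[R] A) : Prop :=
  ∀ a : Fin (m + 1) → A,
    Fin.foldl (m + 1)
      (fun E i => E ∘ₗ LinearMap.mulLeft R (a i) - LinearMap.mulLeft R (a i) ∘ₗ E) D = 0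

open LinearMap MvPolynomial

attribute [local instance] LieRing.ofAssociativeRing

section General

variable {R A : Type*} [CommRing R] [CommRing A] [Algebra R A]

theorem isDiffOpLE_zero_iff {D : Module.End R A} :
    IsDiffOpLE R 0 D ↔ ∀ a : A, ⁅D, Algebra.lmul R A a⁆ = 0 :=
  ⟨fun h a => h fun _ => a, fun h a => h (a 0)⟩

theorem isDiffOpLE_succ_iff {m : ℕ} {D : Module.End R A} :
    IsDiffOpLE R (m + 1) D ↔ ∀ a : A, IsDiffOpLE R m ⁅D, Algebra.lmul R A a⁆ := by
  refine ⟨fun h a b => ?_, fun h a => ?_⟩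
  · have h' := h (Fin.cons a b)
    rw [Fin.foldl_succ] at h'
    exact h'
  · rw [Fin.foldl_succ]
    exact h (a 0) fun i => a i.succ

theorem lie_lmul_apply (D : Module.End R A) (a x : A) :
    ⁅D, Algebra.lmul R A a⁆ x = D (a * x) - a * D x :=
  rfl

theorem lie_lmul_mul (D : Module.End R A) (a b : A) :
    ⁅D, Algebra.lmul R A (a * b)⁆ =
      ⁅D, Algebra.lmul R A a⁆ * Algebra.lmul R A b +
        Algebra.lmul R A a * ⁅D, Algebra.lmul R A b⁆ := by
  simp only [map_mul, Ring.lie_def, sub_mul, mul_sub, mul_assoc]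
  abel

theorem lie_lmul_algebraMap (D : Module.End R A) (r : R) :
    ⁅D, Algebra.lmul R A (algebraMap R A r)⁆ = 0 := by
  rw [AlgHom.commutes, ← commute_iff_lie_eq]
  exact (Algebra.commutes r D).symm

theorem lmul_commute (a b : A) : Commute (Algebra.lmul R A a) (Algebra.lmul R A b) :=
  (Commute.all a b).map _

theorem lmul_mul_lie_lmul (c : A) (D : Module.End R A) (a : A) :
    ⁅Algebra.lmul R A c * D, Algebra.lmul R A a⁆ =
      Algebra.lmul R A c * ⁅D, Algebra.lmul R A a⁆ := by
  simp only [Ring.lie_def, mul_sub, ← mul_assoc, (lmul_commute c a).eq]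

theorem mul_lmul_lie_lmul (D : Module.End R A) (c a : A) :
    ⁅D * Algebra.lmul R A c, Algebra.lmul R A a⁆ =
      ⁅D, Algebra.lmul R A a⁆ * Algebra.lmul R A c := by
  simp only [Ring.lie_def, sub_mul, mul_assoc, (lmul_commute c a).eq]

theorem IsDiffOpLE.zero (m : ℕ) : IsDiffOpLE R m (0 : Module.End R A) := by
  induction m with
  | zero => exact isDiffOpLE_zero_iff.2 fun a => zero_lie _
  | succ m ih => exact isDiffOpLE_succ_iff.2 fun a => by rwa [zero_lie]

theorem IsDiffOpLE.add {m : ℕ} {D E : Module.End R A} (hD : IsDiffOpLE R m D)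
    (hE : IsDiffOpLE R m E) : IsDiffOpLE R m (D + E) := by
  induction m generalizing D E with
  | zero =>
    rw [isDiffOpLE_zero_iff] at *
    intro a
    rw [add_lie, hD a, hE a, add_zero]
  | succ m ih =>
    rw [isDiffOpLE_succ_iff] at *
    intro a
    rw [add_lie]
    exact ih (hD a) (hE a)

theorem IsDiffOpLE.lmul_mul {m : ℕ} {D : Module.End R A} (hD : IsDiffOpLE R m D) (c : A) :
    IsDiffOpLE R m (Algebra.lmul R A c * D) := by
  induction m generalizing D with
  | zero =>
    rw [isDiffOpLE_zero_iff] at *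
    intro a
    rw [lmul_mul_lie_lmul, hD a, mul_zero]
  | succ m ih =>
    rw [isDiffOpLE_succ_iff] at *
    intro a
    rw [lmul_mul_lie_lmul]
    exact ih (hD a)

theorem IsDiffOpLE.mul_lmul {m : ℕ} {D : Module.End R A} (hD : IsDiffOpLE R m D) (c : A) :
    IsDiffOpLE R m (D * Algebra.lmul R A c) := by
  induction m generalizing D with
  | zero =>
    rw [isDiffOpLE_zero_iff] at *
    intro a
    rw [mul_lmul_lie_lmul, hD a, zero_mul]
  | succ m ih =>
    rw [isDiffOpLE_succ_iff] at *
    intro a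
    rw [mul_lmul_lie_lmul]
    exact ih (hD a)

theorem isDiffOpLE_zero_lmul (c : A) : IsDiffOpLE R 0 (Algebra.lmul R A c) :=
  isDiffOpLE_zero_iff.2 fun a => commute_iff_lie_eq.1 (lmul_commute c a)

theorem isDiffOpLE_succ_of_adjoin_eq_top {s : Set A} (hs : Algebra.adjoin R s = ⊤) {m : ℕ}
    {D : Module.End R A} (h : ∀ x ∈ s, IsDiffOpLE R m ⁅D, Algebra.lmul R A x⁆) :
    IsDiffOpLE R (m + 1) D := by
  refine isDiffOpLE_succ_iff.2 fun a => ?_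
  have ha : a ∈ Algebra.adjoin R s := hs ▸ Algebra.mem_top
  induction ha using Algebra.adjoin_induction with
  | mem x hx => exact h x hx
  | algebraMap r => rw [lie_lmul_algebraMap]; exact .zero m
  | add x y _ _ hx hy => rw [map_add, lie_add]; exact hx.add hy
  | mul x y _ _ hx hy => rw [lie_lmul_mul]; exact (hx.mul_lmul y).add (hy.lmul_mul x)

end General

namespace Finsupp

variable {σ : Type*} [Fintype σ]

theorem prod_choose_eq_zero_of_not_le {m n : σ →₀ ℕ} (h : ¬n ≤ m) :
    ∏ i, (m i).choose (n i) = 0 := by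
  obtain ⟨i, hi⟩ := not_forall.1 (mt Finsupp.le_def.2 h)
  exact Finset.prod_eq_zero (Finset.mem_univ i) (Nat.choose_eq_zero_of_lt (not_le.1 hi))

theorem prod_choose_add_single_of_eq_zero {n : σ →₀ ℕ} {j : σ} (hj : n j = 0)
    (m : σ →₀ ℕ) :
    ∏ i, ((m + single j 1 : σ →₀ ℕ) i).choose (n i) = ∏ i, (m i).choose (n i) := by
  refine Finset.prod_congr rfl fun i _ => ?_
  by_cases hij : i = j
  · subst hij; simp [hj]
  · simp [Ne.symm hij]

theorem prod_choose_add_single_add_single [DecidableEq σ] (m n : σ →₀ ℕ) (j : σ) :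
    ∏ i, ((m + single j 1 : σ →₀ ℕ) i).choose ((n + single j 1 : σ →₀ ℕ) i) =
      ∏ i, (m i).choose ((n + single j 1 : σ →₀ ℕ) i) + ∏ i, (m i).choose (n i) := by
  have off : ∀ i ∈ ({j}ᶜ : Finset σ), single j 1 i = 0 := fun i hi =>
    single_eq_of_ne (by simpa using hi)
  simp only [Fintype.prod_eq_mul_prod_compl j, coe_add, Pi.add_apply, single_eq_same,
    Nat.choose_succ_succ', add_mul]
  have h₁ : ∏ i ∈ {j}ᶜ, (m i + single j 1 i).choose (n i + single j 1 i) =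
      ∏ i ∈ {j}ᶜ, (m i).choose (n i) :=
    Finset.prod_congr rfl fun i hi => by rw [off i hi, add_zero, add_zero]
  have h₂ : ∏ i ∈ {j}ᶜ, (m i).choose (n i + single j 1 i) =
      ∏ i ∈ {j}ᶜ, (m i).choose (n i) :=
    Finset.prod_congr rfl fun i hi => by rw [off i hi, add_zero]
  rw [h₁, h₂]
  ring

end Finsupp

theorem MvPolynomial.X_mul_monomial {R σ : Type*} [CommSemiring R] (j : σ) (m : σ →₀ ℕ)
    (r : R) :
    X j * monomial m r = monomial (m + Finsupp.single j 1) r := by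
  rw [mul_comm, X, monomial_mul, mul_one]

section DividedPower

variable {R : Type*} [CommRing R] {σ : Type*} [Fintype σ]

theorem dpOp_monomial (n m : σ →₀ ℕ) (r : R) :
    dpOp R σ n (monomial m r) = (∏ i, (m i).choose (n i)) • monomial (m - n) r := by
  change Finsupp.sum (AddMonoidAlgebra.coeff (monomial m r)) (fun m r =>
    ((∏ i, (m i).choose (n i)) • (monomial (m - n) : R →ₗ[R] MvPolynomial σ R)) r) = _
  rw [sum_monomial_eq (by simp)]
  simp

theorem dpOp_zero : dpOp R σ 0 = 1 :=
  linearMap_ext fun m => LinearMap.ext fun r => by simp [dpOp_monomial]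

theorem lie_dpOp_lmul_X_of_eq_zero {n : σ →₀ ℕ} {j : σ} (hj : n j = 0) :
    ⁅dpOp R σ n, Algebra.lmul R (MvPolynomial σ R) (X j)⁆ = 0 := by
  refine linearMap_ext fun m => LinearMap.ext fun r => ?_
  have hexp : m + Finsupp.single j 1 - n = m - n + Finsupp.single j 1 := by
    ext i
    by_cases hij : i = j
    · subst hij; simp [hj]
    · simp [Finsupp.single_eq_of_ne hij]
  rw [comp_apply, comp_apply, lie_lmul_apply, X_mul_monomial, dpOp_monomial, dpOp_monomial,
    mul_smul_comm, X_mul_monomial, hexp, Finsupp.prod_choose_add_single_of_eq_zero hj, sub_self,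
    LinearMap.zero_apply]

theorem lie_dpOp_add_single_lmul_X (n : σ →₀ ℕ) (j : σ) :
    ⁅dpOp R σ (n + Finsupp.single j 1), Algebra.lmul R (MvPolynomial σ R) (X j)⁆ =
      dpOp R σ n := by
  classical
  refine linearMap_ext fun m => LinearMap.ext fun r => ?_
  -- `m - (n + e_j) + e_j` and `m - n` differ only when the coefficient vanishes.
  have hshift : (∏ i, (m i).choose ((n + Finsupp.single j 1 : σ →₀ ℕ) i)) •
      (monomial (m - (n + Finsupp.single j 1) + Finsupp.single j 1) r : MvPolynomial σ R) =
      (∏ i, (m i).choose ((n + Finsupp.single j 1 : σ →₀ ℕ) i)) • monomial (m - n) r := by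
    by_cases hle : n + Finsupp.single j 1 ≤ m
    · rw [tsub_add_eq_tsub_tsub, tsub_add_cancel_of_le (le_tsub_of_add_le_left hle)]
    · rw [Finsupp.prod_choose_eq_zero_of_not_le hle, zero_smul, zero_smul]
  rw [comp_apply, comp_apply, lie_lmul_apply, X_mul_monomial, dpOp_monomial, dpOp_monomial,
    dpOp_monomial, mul_smul_comm, X_mul_monomial, hshift, add_tsub_add_eq_tsub_right,
    Finsupp.prod_choose_add_single_add_single, add_smul, add_sub_cancel_left]

end DividedPower

/-- The divided-power operator `D_n` is a differential operator of order `≤ |n| = ∑ i, n i`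
in Grothendieck's sense. -/
theorem dpOp_isDiffOpLE (R : Type*) [CommRing R] (σ : Type*) [Fintype σ] (n : σ →₀ ℕ) :
    IsDiffOpLE R (∑ i, n i) (dpOp R σ n) := by
  rw [← Finsupp.degree_eq_sum]
  induction h : n.degree generalizing n with
  | zero =>
    rw [(Finsupp.degree_eq_zero_iff n).1 h, dpOp_zero, ← map_one (Algebra.lmul R _)]
    exact isDiffOpLE_zero_lmul 1
  | succ m ih =>
    refine isDiffOpLE_succ_of_adjoin_eq_top (adjoin_range_X (R := R)) ?_
    rintro _ ⟨j, rfl⟩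
    by_cases hj : n j = 0
    · rw [lie_dpOp_lmul_X_of_eq_zero hj]
      exact .zero m
    · obtain ⟨n, rfl⟩ : ∃ n', n = n' + Finsupp.single j 1 :=
        ⟨n - Finsupp.single j 1,
          (tsub_add_cancel_of_le (Finsupp.single_le_iff.2 (by omega))).symm⟩
      rw [lie_dpOp_add_single_lmul_X]
      exact ih n (by simpa using h)
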